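/- Let Ω ⊆ ℝⁿ be open and let u : Ω → ℝ be a C³ function satisfying the non-divergence form minimal surface equation Σ_{i,j} g^{ij} u_{ij} = 0 on Ω, where v = √(1+|∇u|²), ν = ∇u/v and g^{ij} = δ^{ij} − ν^i ν^j. Then at every point of Ω, Σ_{i,j,k} g^{ij} u_{ijk} ν^k = (2/v)·Σ_{i,j} g^{ij} v_i v_j, where v_i denotes the partial derivatives of v and u_{ijk} the third partial derivatives of u. -/

import Mathlib

open scoped BigOperators

/-- The partial derivative `∂f/∂xᵢ` of a function on Euclidean space. -/
noncomputable def pd {n : ℕ} (i : Fin n) (f : EuclideanSpace ℝ (Fin n) → ℝ)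
    (x : EuclideanSpace ℝ (Fin n)) : ℝ :=
  fderiv ℝ f x (EuclideanSpace.single i 1)

/-- `v = √(1 + |∇u|²)`. -/
noncomputable def vGrad {n : ℕ} (u : EuclideanSpace ℝ (Fin n) → ℝ)
    (x : EuclideanSpace ℝ (Fin n)) : ℝ :=
  Real.sqrt (1 + ∑ i, (pd i u x) ^ 2)

/-- `νⁱ = uᵢ / v`. -/
noncomputable def nuVec {n : ℕ} (u : EuclideanSpace ℝ (Fin n) → ℝ) (i : Fin n)
    (x : EuclideanSpace ℝ (Fin n)) : ℝ :=
  pd i u x / vGrad u x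

/-- `gⁱʲ = δⁱʲ − νⁱ νʲ`. -/
noncomputable def gIJ {n : ℕ} (u : EuclideanSpace ℝ (Fin n) → ℝ) (i j : Fin n)
    (x : EuclideanSpace ℝ (Fin n)) : ℝ :=
  (if i = j then (1 : ℝ) else 0) - nuVec u i x * nuVec u j x

/-! Differentiating `gⁱʲ uᵢⱼ = 0` in `xₖ` and commuting third derivatives gives
`gⁱʲ uᵢⱼₖ = -(∂ₖgⁱʲ) uᵢⱼ = 2 vⱼ ∂ₖνʲ`, since `∂ₖgⁱʲ = -(νⁱ ∂ₖνʲ + νʲ ∂ₖνⁱ)` and `νⁱ uᵢⱼ = vⱼ`.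
Contracting with `νᵏ` and using `νᵏ ∂ₖνʲ = gʲⁱ vᵢ / v` yields the identity. -/

open Filter Topology Finset

section PartialDerivative

variable {n : ℕ} {f g : EuclideanSpace ℝ (Fin n) → ℝ} {x : EuclideanSpace ℝ (Fin n)}

theorem pd_const_add (c : ℝ) (i : Fin n) : pd i (fun y => c + f y) x = pd i f x := by
  rw [pd, fderiv_const_add, pd]

theorem pd_const_sub (c : ℝ) (i : Fin n) : pd i (fun y => c - f y) x = -pd i f x := by
  rw [pd, fderiv_const_sub, pd, neg_apply]

theorem pd_mul (hf : DifferentiableAt ℝ f x) (hg : DifferentiableAt ℝ g x) (i : Fin n) :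
    pd i (fun y => f y * g y) x = pd i f x * g x + f x * pd i g x := by
  simp only [pd, fderiv_fun_mul hf hg, add_apply, smul_apply, smul_eq_mul]
  ring

theorem pd_sum {ι : Type*} (s : Finset ι) {F : ι → EuclideanSpace ℝ (Fin n) → ℝ}
    (hF : ∀ a ∈ s, DifferentiableAt ℝ (F a) x) (i : Fin n) :
    pd i (fun y => ∑ a ∈ s, F a y) x = ∑ a ∈ s, pd i (F a) x := by
  simp only [pd, fderiv_fun_sum hF, _root_.sum_apply]

theorem pd_comp {φ : ℝ → ℝ} {φ' : ℝ} (hφ : HasDerivAt φ φ' (f x))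
    (hf : DifferentiableAt ℝ f x) (i : Fin n) :
    pd i (fun y => φ (f y)) x = φ' * pd i f x := by
  change fderiv ℝ (φ ∘ f) x _ = _
  rw [(hφ.comp_hasFDerivAt x hf.hasFDerivAt).fderiv]
  simp [pd]

theorem Filter.EventuallyEq.pd_eq (h : f =ᶠ[𝓝 x] g) (i : Fin n) : pd i f x = pd i g x := by
  rw [pd, h.fderiv_eq, pd]

theorem contDiffAt_pd {m k : WithTop ℕ∞} (hf : ContDiffAt ℝ k f x) (hmk : m + 1 ≤ k)
    (i : Fin n) : ContDiffAt ℝ m (pd i f) x :=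
  (hf.fderiv_right hmk).clm_apply contDiffAt_const

theorem ContDiffAt.differentiableAt_pd (hf : ContDiffAt ℝ 2 f x) (i : Fin n) :
    DifferentiableAt ℝ (pd i f) x :=
  (contDiffAt_pd (m := 1) hf (by norm_num) i).differentiableAt (by norm_num)

theorem ContDiffAt.pd_comm (hf : ContDiffAt ℝ 2 f x) (i j : Fin n) :
    pd i (pd j f) x = pd j (pd i f) x := by
  have hd : DifferentiableAt ℝ (fderiv ℝ f) x :=
    (hf.fderiv_right (m := 1) (by norm_num)).differentiableAt (by norm_num)
  have hpd : ∀ a b : Fin n, pd a (pd b f) x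
      = fderiv ℝ (fderiv ℝ f) x (EuclideanSpace.single a 1) (EuclideanSpace.single b 1) := by
    intro a b
    rw [pd, show pd b f = fun y => fderiv ℝ f y (EuclideanSpace.single b 1) from rfl,
      fderiv_clm_apply hd (differentiableAt_const _)]
    simp
  rw [hpd, hpd, hf.isSymmSndFDerivAt (by simp)]

theorem ContDiffAt.pd_pd_pd_comm (hf : ContDiffAt ℝ 3 f x) (i j k : Fin n) :
    pd k (pd i (pd j f)) x = pd i (pd j (pd k f)) x := by
  have hnear : pd k (pd j f) =ᶠ[𝓝 x] pd j (pd k f) := by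
    filter_upwards [hf.eventually (by simp)] with y hy
    exact (hy.of_le (by norm_num)).pd_comm k j
  rw [(contDiffAt_pd (m := 2) hf (by norm_num) j).pd_comm k i, hnear.pd_eq]

end PartialDerivative

section MinimalSurface

variable {n : ℕ} {u : EuclideanSpace ℝ (Fin n) → ℝ} {x : EuclideanSpace ℝ (Fin n)}

theorem vGrad_pos : 0 < vGrad u x := Real.sqrt_pos.mpr (by positivity)

theorem differentiableAt_vGrad (hu : ∀ j, DifferentiableAt ℝ (pd j u) x) :
    DifferentiableAt ℝ (vGrad u) x := by
  unfold vGrad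
  fun_prop (disch := positivity)

theorem pd_vGrad (hu : ∀ j, DifferentiableAt ℝ (pd j u) x) (k : Fin n) :
    pd k (vGrad u) x = ∑ j, nuVec u j x * pd k (pd j u) x := by
  have hs : 1 + ∑ j, pd j u x ^ 2 ≠ 0 := by positivity
  have hsq : ∀ j, pd k (fun y => pd j u y ^ 2) x = 2 * pd j u x * pd k (pd j u) x := fun j => by
    simpa using pd_comp (hasDerivAt_pow 2 (pd j u x)) (hu j) k
  change pd k (fun y => √(1 + ∑ j, pd j u y ^ 2)) x = _
  rw [pd_comp (Real.hasDerivAt_sqrt hs) (by fun_prop), pd_const_add,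
    pd_sum _ (fun j _ => by fun_prop)]
  simp only [hsq, nuVec, vGrad, mul_sum]
  refine sum_congr rfl fun j _ => ?_
  field_simp

theorem differentiableAt_nuVec (hu : ∀ j, DifferentiableAt ℝ (pd j u) x) (i : Fin n) :
    DifferentiableAt ℝ (nuVec u i) x :=
  (hu i).mul ((differentiableAt_vGrad hu).inv vGrad_pos.ne')

theorem differentiableAt_gIJ (hu : ∀ j, DifferentiableAt ℝ (pd j u) x) (i j : Fin n) :
    DifferentiableAt ℝ (gIJ u i j) x :=
  (differentiableAt_const _).sub ((differentiableAt_nuVec hu i).mul (differentiableAt_nuVec hu j))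

theorem pd_nuVec (hu : ∀ j, DifferentiableAt ℝ (pd j u) x) (i k : Fin n) :
    pd k (nuVec u i) x = (pd k (pd i u) x - nuVec u i x * pd k (vGrad u) x) / vGrad u x := by
  have hv := vGrad_pos (u := u) (x := x)
  change pd k (fun y => pd i u y * (vGrad u y)⁻¹) x = _
  rw [pd_mul (g := fun y => (vGrad u y)⁻¹) (hu i) ((differentiableAt_vGrad hu).inv hv.ne'),
    pd_comp (hasDerivAt_inv hv.ne') (differentiableAt_vGrad hu), nuVec]
  field_simp
  ring

theorem pd_gIJ (hu : ∀ j, DifferentiableAt ℝ (pd j u) x) (i j k : Fin n) :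
    pd k (gIJ u i j) x
      = -(nuVec u i x * pd k (nuVec u j) x + nuVec u j x * pd k (nuVec u i) x) := by
  change pd k (fun y => _ - nuVec u i y * nuVec u j y) x = _
  rw [pd_const_sub, pd_mul (differentiableAt_nuVec hu i) (differentiableAt_nuVec hu j)]
  ring

theorem sum_nuVec_mul_pd_pd (hu : ContDiffAt ℝ 2 u x) (j : Fin n) :
    ∑ i, nuVec u i x * pd i (pd j u) x = pd j (vGrad u) x := by
  rw [pd_vGrad hu.differentiableAt_pd]
  simp only [hu.pd_comm]

theorem sum_nuVec_mul_pd_nuVec (hu : ContDiffAt ℝ 2 u x) (j : Fin n) :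
    ∑ k, nuVec u k x * pd k (nuVec u j) x
      = (∑ i, gIJ u j i x * pd i (vGrad u) x) / vGrad u x := by
  simp only [pd_nuVec hu.differentiableAt_pd, gIJ, mul_div_assoc', ← sum_div, mul_sub, sub_mul,
    sum_sub_distrib, sum_nuVec_mul_pd_pd hu, ite_mul, one_mul, zero_mul, sum_ite_eq, mem_univ,
    if_true]
  congr 2
  exact sum_congr rfl fun _ _ => by ring

theorem sum_gIJ_mul_pd_pd_pd_eq_neg (hu : ContDiffAt ℝ 3 u x)
    (hmse : ∀ᶠ y in 𝓝 x, ∑ i, ∑ j, gIJ u i j y * pd i (pd j u) y = 0) (k : Fin n) :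
    ∑ i, ∑ j, gIJ u i j x * pd i (pd j (pd k u)) x
      = -∑ i, ∑ j, pd k (gIJ u i j) x * pd i (pd j u) x := by
  have hg := differentiableAt_gIJ (hu.of_le (by norm_num)).differentiableAt_pd
  have hq i j : DifferentiableAt ℝ (pd i (pd j u)) x :=
    (contDiffAt_pd hu (by norm_num) j).differentiableAt_pd i
  have hpd : pd k (fun y => ∑ i, ∑ j, gIJ u i j y * pd i (pd j u) y) x = 0 := by
    rw [EventuallyEq.pd_eq hmse]
    simp [pd]
  have hrow i : pd k (fun y => ∑ j, gIJ u i j y * pd i (pd j u) y) x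
      = ∑ j, (pd k (gIJ u i j) x * pd i (pd j u) x + gIJ u i j x * pd i (pd j (pd k u)) x) := by
    rw [pd_sum (F := fun j y => gIJ u i j y * pd i (pd j u) y) _
      fun j _ => (hg i j).mul (hq i j)]
    simp only [pd_mul (hg i _) (hq i _), hu.pd_pd_pd_comm _ _ k]
  rw [pd_sum (F := fun i y => ∑ j, gIJ u i j y * pd i (pd j u) y) _
    fun i _ => .fun_sum fun j _ => (hg i j).mul (hq i j)] at hpd
  simp only [hrow, sum_add_distrib] at hpd
  linarith

theorem sum_gIJ_mul_pd_pd_pd_eq_two_mul (hu : ContDiffAt ℝ 3 u x)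
    (hmse : ∀ᶠ y in 𝓝 x, ∑ i, ∑ j, gIJ u i j y * pd i (pd j u) y = 0) (k : Fin n) :
    ∑ i, ∑ j, gIJ u i j x * pd i (pd j (pd k u)) x
      = 2 * ∑ j, pd j (vGrad u) x * pd k (nuVec u j) x := by
  have hu2 : ContDiffAt ℝ 2 u x := hu.of_le (by norm_num)
  rw [sum_gIJ_mul_pd_pd_pd_eq_neg hu hmse k]
  simp only [pd_gIJ hu2.differentiableAt_pd, neg_mul, sum_neg_distrib, neg_neg, add_mul,
    sum_add_distrib]
  have hw : ∀ j, ∑ i, nuVec u i x * pd i (pd j u) x = pd j (vGrad u) x :=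
    sum_nuVec_mul_pd_pd hu2
  have hw' : ∀ i, ∑ j, nuVec u j x * pd i (pd j u) x = pd i (vGrad u) x := fun i =>
    (pd_vGrad hu2.differentiableAt_pd i).symm
  have h1 : ∑ i, ∑ j, nuVec u i x * pd k (nuVec u j) x * pd i (pd j u) x
      = ∑ j, pd j (vGrad u) x * pd k (nuVec u j) x := by
    rw [sum_comm]
    refine sum_congr rfl fun j _ => ?_
    rw [← hw j, sum_mul]
    exact sum_congr rfl fun i _ => by ring
  have h2 : ∑ i, ∑ j, nuVec u j x * pd k (nuVec u i) x * pd i (pd j u) x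
      = ∑ i, pd i (vGrad u) x * pd k (nuVec u i) x := by
    refine sum_congr rfl fun i _ => ?_
    rw [← hw' i, sum_mul]
    exact sum_congr rfl fun j _ => by ring
  rw [h1, h2, two_mul]

end MinimalSurface

/-- The paper's identities (5)–(6) combined (Euclidean case): if `u` is a `C³` solution
of the non-divergence form minimal surface equation `Σ gⁱʲ uᵢⱼ = 0` on an open set
`Ω ⊆ ℝⁿ`, then `Σ gⁱʲ uᵢⱼₖ νᵏ = (2/v) Σ gⁱʲ vᵢ vⱼ` at every point of `Ω`. -/
theorem third_derivative_contraction_identity (n : ℕ) (Ω : Set (EuclideanSpace ℝ (Fin n)))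
    (hΩ : IsOpen Ω) (u : EuclideanSpace ℝ (Fin n) → ℝ) (hu : ContDiffOn ℝ 3 u Ω)
    (hmse : ∀ x ∈ Ω, ∑ i, ∑ j, gIJ u i j x * pd i (pd j u) x = 0) :
    ∀ x ∈ Ω,
      ∑ i, ∑ j, ∑ k, gIJ u i j x * pd i (pd j (pd k u)) x * nuVec u k x
        = (2 / vGrad u x) * ∑ i, ∑ j, gIJ u i j x * pd i (vGrad u) x * pd j (vGrad u) x := by
  intro x hx
  have hΩx : Ω ∈ 𝓝 x := hΩ.mem_nhds hx
  have hu3 : ContDiffAt ℝ 3 u x := hu.contDiffAt hΩx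
  calc ∑ i, ∑ j, ∑ k, gIJ u i j x * pd i (pd j (pd k u)) x * nuVec u k x
      = ∑ k, (∑ i, ∑ j, gIJ u i j x * pd i (pd j (pd k u)) x) * nuVec u k x := by
        simp only [sum_mul]
        exact (sum_congr rfl fun i _ => sum_comm).trans sum_comm
    _ = 2 * ∑ j, pd j (vGrad u) x * ∑ k, nuVec u k x * pd k (nuVec u j) x := by
        simp only [sum_gIJ_mul_pd_pd_pd_eq_two_mul hu3 (eventually_of_mem hΩx hmse),
          mul_sum, sum_mul]
        rw [sum_comm]
        exact sum_congr rfl fun j _ => sum_congr rfl fun k _ => by ring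
    _ = (2 / vGrad u x) * ∑ i, ∑ j, gIJ u i j x * pd i (vGrad u) x * pd j (vGrad u) x := by
        simp only [sum_nuVec_mul_pd_nuVec (hu3.of_le (by norm_num)), mul_sum, sum_div]
        exact sum_congr rfl fun i _ => sum_congr rfl fun j _ => by ring
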